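/- arXiv:2307.07632 — 8 statements merged into one kernel-verified Lean document; each statement's English description precedes it below -/
import Mathlib

section
/- Let G and L be invertible m×m real matrices, let g, h ∈ ℝ^m, and let p : Fin v → Fin m be an injective map of validation indices. Assume that the submatrix G^{p,p} (rows and columns not in the range of p) is invertible and that the submatrix (G⁻¹)_{p,p} is invertible. Set c = G⁻¹g, f = Lc, let c^(p) be the unique solution of G^{p,p} c^(p) = g^p, define the validation values s_p ∈ ℝ^v by (s_p)_i = Σ_{j ∉ range p} L_{p_i, j} (c^(p))_j, and the exact validation error e_p = h_p − s_p. If α ∈ ℝ^v satisfies (L⁻¹)_{:,p} α = (G⁻¹)_{:,p} ((G⁻¹)_{p,p})⁻¹ (G⁻¹ g)_p, then α = f_p − s_p; equivalently, e_p = α − f_p + h_p. -/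
/-!
Extend `c^(p)` by zero to `ĉ` and put `w = c - ĉ`. Then `G w` vanishes off the validation
indices, so `w = G⁻¹ (G w) = (G⁻¹)_{:,p} γ` with `γ = (G w)_p`. Reading this on the rows `p`
gives `c_p = w_p = (G⁻¹)_{p,p} γ`, hence the right-hand side of the equation for `α` is exactly
`w`. Multiplying `(L⁻¹)_{:,p} α = w` by `L` shows that `L w` is `α` extended by zero, so
`α = (L w)_p = f_p - (L ĉ)_p = f_p - s_p`.
-/

open Matrix Function

namespace Matrix

variable {R l n ι : Type*} [Fintype n] [Fintype ι]

theorem submatrix_id_mulVec_eq_mulVec_extend [NonUnitalNonAssocSemiring R] (M : Matrix l n R)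
    {q : ι → n} (hq : Injective q) (x : ι → R) :
    M.submatrix id q *ᵥ x = M *ᵥ extend q x 0 := by
  ext a
  refine Fintype.sum_of_injective q hq _ _ (fun j hj => ?_) (fun i => ?_)
  · simp [extend_apply' _ _ _ hj]
  · simp [hq.extend_apply]

variable [DecidableEq n] [CommRing R]

theorem inv_submatrix_mulVec_inv_submatrix_mulVec_comp_eq [DecidableEq ι] {G : Matrix n n R}
    (hG : IsUnit G) {p : ι → n} (hp : Injective p) (hGp : IsUnit ((G⁻¹).submatrix p p))
    {w : n → R} (hw : ∀ j ∉ Set.range p, (G *ᵥ w) j = 0) :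
    (G⁻¹).submatrix id p *ᵥ (((G⁻¹).submatrix p p)⁻¹ *ᵥ (w ∘ p)) = w := by
  set γ := (G *ᵥ w) ∘ p
  have hextend : extend p γ 0 = G *ᵥ w := by
    funext j
    by_cases hj : j ∈ Set.range p
    · obtain ⟨i, rfl⟩ := hj
      exact hp.extend_apply _ _ i
    · rw [extend_apply' _ _ _ hj, hw j hj, Pi.zero_apply]
  have hcols : (G⁻¹).submatrix id p *ᵥ γ = w := by
    rw [submatrix_id_mulVec_eq_mulVec_extend _ hp, hextend, mulVec_mulVec,
      nonsing_inv_mul _ (G.isUnit_iff_isUnit_det.mp hG), one_mulVec]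
  have hrows : (G⁻¹).submatrix p p *ᵥ γ = w ∘ p := congrArg (· ∘ p) hcols
  rw [← hrows, mulVec_mulVec γ, nonsing_inv_mul _ ((isUnit_iff_isUnit_det _).mp hGp),
    one_mulVec, hcols]

theorem eq_mulVec_comp_of_inv_submatrix_mulVec_eq {L : Matrix n n R} (hL : IsUnit L)
    {p : ι → n} (hp : Injective p) {α : ι → R} {w : n → R}
    (h : (L⁻¹).submatrix id p *ᵥ α = w) : α = (L *ᵥ w) ∘ p := by
  rw [submatrix_id_mulVec_eq_mulVec_extend _ hp] at h
  rw [← h, mulVec_mulVec, mul_nonsing_inv _ (L.isUnit_iff_isUnit_det.mp hL), one_mulVec]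
  funext i
  exact (hp.extend_apply α 0 i).symm

end Matrix

open scoped Classical

theorem surrogate_cv_exact_alpha_general {m v : ℕ}
    (G L : Matrix (Fin m) (Fin m) ℝ) (g h : Fin m → ℝ)
    (hG : IsUnit G) (hL : IsUnit L)
    (p : Fin v → Fin m) (hp : Function.Injective p)
    (hGinvpp : IsUnit ((G⁻¹).submatrix p p))
    (c : Fin m → ℝ) (hc : c = G⁻¹ *ᵥ g)
    (f : Fin m → ℝ) (hf : f = L *ᵥ c)
    (cp : {j : Fin m // j ∉ Set.range p} → ℝ)
    (hcp : G.submatrix (Subtype.val : {j : Fin m // j ∉ Set.range p} → Fin m)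
      (Subtype.val : {j : Fin m // j ∉ Set.range p} → Fin m) *ᵥ cp = fun j => g j.1)
    (sp : Fin v → ℝ)
    (hsp : sp = fun i => ∑ j : {j : Fin m // j ∉ Set.range p}, L (p i) j.1 * cp j)
    (ep : Fin v → ℝ) (hep : ep = fun i => h (p i) - sp i)
    (α : Fin v → ℝ)
    (hα : (L⁻¹).submatrix id p *ᵥ α =
      (G⁻¹).submatrix id p *ᵥ (((G⁻¹).submatrix p p)⁻¹ *ᵥ fun i => (G⁻¹ *ᵥ g) (p i))) :
    (α = fun i => f (p i) - sp i) ∧ (ep = fun i => α i - f (p i) + h (p i)) := by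
  set ĉ := extend Subtype.val cp 0
  have hĉ (M : Matrix (Fin m) (Fin m) ℝ) : M *ᵥ ĉ = M.submatrix id Subtype.val *ᵥ cp :=
    (submatrix_id_mulVec_eq_mulVec_extend M Subtype.val_injective cp).symm
  have hGw : ∀ j ∉ Set.range p, (G *ᵥ (c - ĉ)) j = 0 := by
    intro j hj
    rw [mulVec_sub, hc, mulVec_mulVec, mul_nonsing_inv _ (G.isUnit_iff_isUnit_det.mp hG),
      one_mulVec, hĉ, Pi.sub_apply, sub_eq_zero]
    exact (congrFun hcp ⟨j, hj⟩).symm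
  have hwp : (c - ĉ) ∘ p = fun i => (G⁻¹ *ᵥ g) (p i) := by
    funext i
    have hĉp : ĉ (p i) = 0 := extend_apply' _ _ _ fun ⟨j, hj⟩ => j.2 ⟨i, hj.symm⟩
    simp [hĉp, hc]
  have hαf : α = fun i => f (p i) - sp i := by
    rw [← hwp, inv_submatrix_mulVec_inv_submatrix_mulVec_comp_eq hG hp hGinvpp hGw] at hα
    rw [eq_mulVec_comp_of_inv_submatrix_mulVec_eq hL hp hα, hf, hsp, mulVec_sub, hĉ]
    rfl
  refine ⟨hαf, ?_⟩
  rw [hep, hαf]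
  funext i
  ring

/-- Surrogate cross-validation, exact-solution case: if `α` solves the linear system
`(L⁻¹)_{:,p} α = (G⁻¹)_{:,p} ((G⁻¹)_{p,p})⁻¹ (G⁻¹ g)_p` exactly, then
`α = f_p − s_p`, equivalently `e_p = α − f_p + h_p`. -/
theorem surrogate_cv_exact_alpha {m v : ℕ}
    (G L : Matrix (Fin m) (Fin m) ℝ) (g h : Fin m → ℝ)
    (hG : IsUnit G) (hL : IsUnit L)
    (p : Fin v → Fin m) (hp : Function.Injective p)
    (hGpp : IsUnit (G.submatrix (Subtype.val : {j : Fin m // j ∉ Set.range p} → Fin m)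
      (Subtype.val : {j : Fin m // j ∉ Set.range p} → Fin m)))
    (hGinvpp : IsUnit ((G⁻¹).submatrix p p))
    (c : Fin m → ℝ) (hc : c = G⁻¹ *ᵥ g)
    (f : Fin m → ℝ) (hf : f = L *ᵥ c)
    (cp : {j : Fin m // j ∉ Set.range p} → ℝ)
    (hcp : G.submatrix (Subtype.val : {j : Fin m // j ∉ Set.range p} → Fin m)
      (Subtype.val : {j : Fin m // j ∉ Set.range p} → Fin m) *ᵥ cp = fun j => g j.1)
    (sp : Fin v → ℝ)
    (hsp : sp = fun i => ∑ j : {j : Fin m // j ∉ Set.range p}, L (p i) j.1 * cp j)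
    (ep : Fin v → ℝ) (hep : ep = fun i => h (p i) - sp i)
    (α : Fin v → ℝ)
    (hα : (L⁻¹).submatrix id p *ᵥ α =
      (G⁻¹).submatrix id p *ᵥ (((G⁻¹).submatrix p p)⁻¹ *ᵥ fun i => (G⁻¹ *ᵥ g) (p i))) :
    (α = fun i => f (p i) - sp i) ∧ (ep = fun i => α i - f (p i) + h (p i)) :=
  surrogate_cv_exact_alpha_general G L g h hG hL p hp hGinvpp c hc f hf cp hcp sp hsp ep hep α hα
end

section
/- Let G and L be invertible m×m real matrices, let g, h ∈ ℝ^m, and let p : Fin v → Fin m be an injective map of validation indices. Assume that the submatrix G^{p,p} is invertible and that (G⁻¹)_{p,p} is invertible. Set c = G⁻¹g, f = Lc, let c^(p) solve G^{p,p} c^(p) = g^p, define (s_p)_i = Σ_{j ∉ range p} L_{p_i, j} (c^(p))_j and the exact validation error e_p = h_p − s_p. Put M = (L⁻¹)_{:,p} and w = (G⁻¹)_{:,p} ((G⁻¹)_{p,p})⁻¹ (G⁻¹ g)_p. Then MᵀM is invertible, and if the residual vanishes, i.e. M (MᵀM)⁻¹ Mᵀ w = w, then e_p = (MᵀM)⁻¹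 Mᵀ w − f_p + h_p; that is, the surrogate cross-validation error ε_p = (MᵀM)⁻¹ Mᵀ w − f_p + h_p equals the exact validation error e_p. -/
/-!
Let `c̃` be the zero extension of `c^(p)`. Then `G (c - c̃)` vanishes off the validation indices,
so `c - c̃` is a combination of the columns `(G⁻¹)_{:,p}`, and reading off its `p`-entries
(where `c̃` vanishes) shows `c - c̃ = w`. If `w` lies in the column space of `M = (L⁻¹)_{:,p}`,
then the least-squares coefficients `u` satisfy `M u = w`, and multiplying by `L` gives
`u = (L w)_p = f_p - (L c̃)_p = f_p - s_p`.
-/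

open Matrix

namespace Matrix

section Semiring

variable {R κ n ι : Type*} [NonUnitalNonAssocSemiring R] [Fintype n] [Fintype ι]

theorem mulVec_eq_submatrix_mulVec_of_eq_zero_off_range (A : Matrix κ n R) {p : ι → n}
    (hp : Function.Injective p) {z : n → R} (hz : ∀ k ∉ Set.range p, z k = 0) :
    A *ᵥ z = A.submatrix id p *ᵥ (z ∘ p) := by
  funext j
  exact (Fintype.sum_of_injective p hp _ _ (fun k hk => by simp [hz k hk]) fun _ => rfl).symm

theorem mulVec_extend_zero (A : Matrix κ n R) {p : ι → n} (hp : Function.Injective p)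
    (u : ι → R) : A *ᵥ Function.extend p u 0 = A.submatrix id p *ᵥ u := by
  rw [mulVec_eq_submatrix_mulVec_of_eq_zero_off_range A hp (z := Function.extend p u 0)
    fun k hk => Function.extend_apply' _ _ _ (by simpa using hk), Function.extend_comp hp]

end Semiring

section CommRing

variable {R n ι : Type*} [CommRing R] [Fintype n] [DecidableEq n] [Fintype ι] {p : ι → n}

theorem comp_mulVec_inv_submatrix_mulVec {A : Matrix n n R} (hA : IsUnit A)
    (hp : Function.Injective p) (u : ι → R) :
    (A *ᵥ ((A⁻¹).submatrix id p *ᵥ u)) ∘ p = u := by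
  rw [← mulVec_extend_zero _ hp, mulVec_mulVec,
    mul_nonsing_inv _ ((isUnit_iff_isUnit_det A).mp hA), one_mulVec, Function.extend_comp hp]

theorem injective_inv_submatrix_mulVec {A : Matrix n n R} (hA : IsUnit A)
    (hp : Function.Injective p) : Function.Injective ((A⁻¹).submatrix id p).mulVec :=
  Function.LeftInverse.injective (g := fun z => (A *ᵥ z) ∘ p)
    (comp_mulVec_inv_submatrix_mulVec hA hp)

theorem eq_inv_submatrix_mulVec_of_mulVec_eq_zero_off_range [DecidableEq ι] {G : Matrix n n R}
    (hG : IsUnit G) (hp : Function.Injective p) (hGp : IsUnit ((G⁻¹).submatrix p p))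
    {y : n → R} (hy : ∀ k ∉ Set.range p, (G *ᵥ y) k = 0) :
    y = (G⁻¹).submatrix id p *ᵥ (((G⁻¹).submatrix p p)⁻¹ *ᵥ (y ∘ p)) := by
  have hy_cols : y = (G⁻¹).submatrix id p *ᵥ ((G *ᵥ y) ∘ p) := by
    rw [← mulVec_eq_submatrix_mulVec_of_eq_zero_off_range _ hp hy, mulVec_mulVec,
      nonsing_inv_mul _ ((isUnit_iff_isUnit_det G).mp hG), one_mulVec]
  have hy_rows : y ∘ p = (G⁻¹).submatrix p p *ᵥ ((G *ᵥ y) ∘ p) := by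
    conv_lhs => rw [hy_cols]
    rfl
  rw [hy_rows, mulVec_mulVec _ ((G⁻¹).submatrix p p)⁻¹,
    nonsing_inv_mul _ ((isUnit_iff_isUnit_det _).mp hGp), one_mulVec]
  exact hy_cols

end CommRing

theorem isUnit_transpose_mul_self_of_injective {R m n : Type*} [Field R] [LinearOrder R]
    [IsStrictOrderedRing R] [Fintype m] [Fintype n] [DecidableEq n] {A : Matrix m n R}
    (hA : Function.Injective A.mulVec) : IsUnit (Aᵀ * A) := by
  rw [← mulVec_injective_iff_isUnit]
  have hker : LinearMap.ker (Aᵀ * A).mulVecLin = ⊥ := by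
    rw [ker_mulVecLin_transpose_mul_self]
    exact LinearMap.ker_eq_bot.mpr hA
  exact LinearMap.ker_eq_bot.mp hker

end Matrix

open scoped Classical in
theorem surrogate_cv_general {m v : ℕ}
    (G L : Matrix (Fin m) (Fin m) ℝ) (g h : Fin m → ℝ)
    (hG : IsUnit G) (hL : IsUnit L)
    (p : Fin v → Fin m) (hp : Function.Injective p)
    (hGinvpp : IsUnit ((G⁻¹).submatrix p p))
    (c : Fin m → ℝ) (hc : c = G⁻¹ *ᵥ g)
    (f : Fin m → ℝ) (hf : f = L *ᵥ c)
    (cp : {j : Fin m // j ∉ Set.range p} → ℝ)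
    (hcp : G.submatrix (Subtype.val : {j : Fin m // j ∉ Set.range p} → Fin m)
      (Subtype.val : {j : Fin m // j ∉ Set.range p} → Fin m) *ᵥ cp = fun j => g j.1)
    (sp : Fin v → ℝ)
    (hsp : sp = fun i => ∑ j : {j : Fin m // j ∉ Set.range p}, L (p i) j.1 * cp j)
    (ep : Fin v → ℝ) (hep : ep = fun i => h (p i) - sp i)
    (M : Matrix (Fin m) (Fin v) ℝ) (hM : M = (L⁻¹).submatrix id p)
    (w : Fin m → ℝ)
    (hw : w = (G⁻¹).submatrix id p *ᵥ (((G⁻¹).submatrix p p)⁻¹ *ᵥ fun i => (G⁻¹ *ᵥ g) (p i))) :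
    IsUnit (Mᵀ * M) ∧
      (M *ᵥ ((Mᵀ * M)⁻¹ *ᵥ (Mᵀ *ᵥ w)) = w →
        ep = fun i => ((Mᵀ * M)⁻¹ *ᵥ (Mᵀ *ᵥ w)) i - f (p i) + h (p i)) := by
  refine ⟨isUnit_transpose_mul_self_of_injective (hM ▸ injective_inv_submatrix_mulVec hL hp),
    fun hres => ?_⟩
  set ct : Fin m → ℝ := Function.extend Subtype.val cp 0
  have hct_p (i : Fin v) : ct (p i) = 0 :=
    Function.extend_apply' _ _ _ fun ⟨j, hj⟩ => j.2 ⟨i, hj.symm⟩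
  have hGc : G *ᵥ c = g := by
    rw [hc, mulVec_mulVec, mul_nonsing_inv _ ((isUnit_iff_isUnit_det G).mp hG), one_mulVec]
  have hGct (k : Fin m) (hk : k ∉ Set.range p) : (G *ᵥ ct) k = g k :=
    (congrArg (· k) (mulVec_extend_zero G Subtype.val_injective cp)).trans
      (congrFun hcp ⟨k, hk⟩)
  have hw_eq : w = c - ct := by
    have hcomp : (c - ct) ∘ p = fun i => (G⁻¹ *ᵥ g) (p i) := by
      funext i
      simp [hc, hct_p]
    rw [hw, ← hcomp]
    refine (eq_inv_submatrix_mulVec_of_mulVec_eq_zero_off_range hG hp hGinvpp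
      fun k hk => ?_).symm
    rw [mulVec_sub, Pi.sub_apply, hGc, hGct k hk, sub_self]
  set u := (Mᵀ * M)⁻¹ *ᵥ (Mᵀ *ᵥ w)
  have hu : (L *ᵥ w) ∘ p = u := by
    rw [← hres, hM]
    exact comp_mulVec_inv_submatrix_mulVec hL hp u
  funext i
  rw [← congrFun hu i, hw_eq, hep, hsp, hf, Function.comp_apply, mulVec_sub, Pi.sub_apply,
    mulVec_extend_zero L Subtype.val_injective]
  simp only [mulVec, dotProduct, submatrix_apply, id]
  ring

/-- Surrogate cross-validation theorem: with `M = (L⁻¹)_{:,p}` and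
`w = (G⁻¹)_{:,p} ((G⁻¹)_{p,p})⁻¹ (G⁻¹ g)_p`, the Gram matrix `MᵀM` is invertible, and if the
least-squares residual vanishes (`M (MᵀM)⁻¹ Mᵀ w = w`) then the surrogate CV error
`ε_p = (MᵀM)⁻¹ Mᵀ w − f_p + h_p` equals the exact validation error `e_p`. -/
theorem surrogate_cv {m v : ℕ}
    (G L : Matrix (Fin m) (Fin m) ℝ) (g h : Fin m → ℝ)
    (hG : IsUnit G) (hL : IsUnit L)
    (p : Fin v → Fin m) (hp : Function.Injective p)
    (hGpp : IsUnit (G.submatrix (Subtype.val : {j : Fin m // j ∉ Set.range p} → Fin m)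
      (Subtype.val : {j : Fin m // j ∉ Set.range p} → Fin m)))
    (hGinvpp : IsUnit ((G⁻¹).submatrix p p))
    (c : Fin m → ℝ) (hc : c = G⁻¹ *ᵥ g)
    (f : Fin m → ℝ) (hf : f = L *ᵥ c)
    (cp : {j : Fin m // j ∉ Set.range p} → ℝ)
    (hcp : G.submatrix (Subtype.val : {j : Fin m // j ∉ Set.range p} → Fin m)
      (Subtype.val : {j : Fin m // j ∉ Set.range p} → Fin m) *ᵥ cp = fun j => g j.1)
    (sp : Fin v → ℝ)
    (hsp : sp = fun i => ∑ j : {j : Fin m // j ∉ Set.range p}, L (p i) j.1 * cp j)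
    (ep : Fin v → ℝ) (hep : ep = fun i => h (p i) - sp i)
    (M : Matrix (Fin m) (Fin v) ℝ) (hM : M = (L⁻¹).submatrix id p)
    (w : Fin m → ℝ)
    (hw : w = (G⁻¹).submatrix id p *ᵥ (((G⁻¹).submatrix p p)⁻¹ *ᵥ fun i => (G⁻¹ *ᵥ g) (p i))) :
    IsUnit (Mᵀ * M) ∧
      (M *ᵥ ((Mᵀ * M)⁻¹ *ᵥ (Mᵀ *ᵥ w)) = w →
        ep = fun i => ((Mᵀ * M)⁻¹ *ᵥ (Mᵀ *ᵥ w)) i - f (p i) + h (p i)) :=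
  surrogate_cv_general G L g h hG hL p hp hGinvpp c hc f hf cp hcp sp hsp ep hep M hM w hw
end

section
/- Leave-one-out case of the surrogate cross-validation theorem. Let G and L be invertible m×m real matrices, g, h ∈ ℝ^m, and let p ∈ {1,…,m} be a single validation index. Assume that the (m−1)×(m−1) submatrix of G obtained by deleting row and column p is invertible, and that (G⁻¹)_{p,p} ≠ 0. Set c = G⁻¹g, f = Lc, let c^(p) solve the reduced system on the complement of p, define s_p = Σ_{j ≠ p} L_{p,j} (c^(p))_j and e_p = h_p − s_p. Let u ∈ ℝ^m be the p-th column of L⁻¹ and w = ((G⁻¹ g)_p / (G⁻¹)_{p,p}) · (p-th column of G⁻¹). If w is a scalar multiple of u, then e_p = ⟨u, w⟩/‖u‖² − f_p + h_p, where ⟨·,·⟩ is the Euclidean inner product and ‖·‖ the Euclidean norm. -/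
open Matrix
open scoped Classical

/-!
Let `c = G⁻¹ g` and let `w` be the multiple of the `p`-th column of `G⁻¹` with `w_p = c_p`.
Then `G w` is a multiple of `e_p`, so `c - w` vanishes at `p` and satisfies every equation of
`G x = g` except the `p`-th one; its restriction is therefore the reduced solution `c^(p)`.
Hence `s_p = (L (c - w))_p = f_p - (L w)_p`, and `w = t u` with `L u = e_p` gives `(L w)_p = t`,
which is also `⟨u, w⟩ / ‖u‖²`.
-/

section LeaveOneOut

variable {ι K : Type*} [Fintype ι]

theorem dotProduct_smul_self_div [Field K] [LinearOrder K] [IsStrictOrderedRing K]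
    {u : ι → K} (hu : u ≠ 0) (t : K) : u ⬝ᵥ (t • u) / (u ⬝ᵥ u) = t := by
  rw [dotProduct_smul, smul_eq_mul, mul_div_cancel_right₀ _ (dotProduct_self_eq_zero.not.mpr hu)]

variable [DecidableEq ι]

theorem sum_subtype_ne_mul_eq_dotProduct {R : Type*} [NonUnitalNonAssocSemiring R] {p : ι}
    (a x : ι → R) (hx : x p = 0) : ∑ j : {j // j ≠ p}, a j * x j = a ⬝ᵥ x := by
  rw [dotProduct, Fintype.sum_eq_add_sum_subtype_ne _ p, hx, mul_zero, zero_add]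

theorem submatrix_val_mulVec_of_apply_eq_zero {R : Type*} [NonUnitalNonAssocSemiring R]
    (A : Matrix ι ι R) {p : ι} {x : ι → R} (hx : x p = 0) :
    A.submatrix (Subtype.val : {j // j ≠ p} → ι) (Subtype.val : {j // j ≠ p} → ι) *ᵥ
      (fun j => x j.1) = fun i => (A *ᵥ x) i.1 :=
  funext fun i => sum_subtype_ne_mul_eq_dotProduct (A i.1) x hx

theorem mulVec_col_inv {R : Type*} [CommRing R] {A : Matrix ι ι R} (hA : IsUnit A) (p : ι) :
    A *ᵥ A⁻¹.col p = Pi.single p 1 := by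
  rw [← mulVec_single_one, mulVec_mulVec, mul_nonsing_inv _ ((isUnit_iff_isUnit_det A).mp hA),
    one_mulVec]

variable [Field K]

noncomputable def looCorrection (G : Matrix ι ι K) (g : ι → K) (p : ι) : ι → K :=
  ((G⁻¹ *ᵥ g) p / G⁻¹ p p) • G⁻¹.col p

theorem looCorrection_apply_self {G : Matrix ι ι K} (g : ι → K) {p : ι}
    (h : G⁻¹ p p ≠ 0) : looCorrection G g p p = (G⁻¹ *ᵥ g) p :=
  div_mul_cancel₀ _ h

theorem mulVec_looCorrection {G : Matrix ι ι K} (hG : IsUnit G) (g : ι → K) (p : ι) :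
    G *ᵥ looCorrection G g p = Pi.single p ((G⁻¹ *ᵥ g) p / G⁻¹ p p) := by
  rw [looCorrection, mulVec_smul, mulVec_col_inv hG, ← Pi.single_smul, smul_eq_mul, mul_one]

theorem reduced_solution_eq_sub_looCorrection {G : Matrix ι ι K} {g : ι → K} {p : ι}
    (hG : IsUnit G) (hGpp : IsUnit (G.submatrix (Subtype.val : {j // j ≠ p} → ι)
      (Subtype.val : {j // j ≠ p} → ι)))
    (hGinvpp : G⁻¹ p p ≠ 0) {cp : {j // j ≠ p} → K}
    (hcp : G.submatrix (Subtype.val : {j // j ≠ p} → ι)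
      (Subtype.val : {j // j ≠ p} → ι) *ᵥ cp = fun j => g j.1) :
    cp = fun j => (G⁻¹ *ᵥ g - looCorrection G g p) j.1 := by
  have hzero : (G⁻¹ *ᵥ g - looCorrection G g p) p = 0 := by
    rw [Pi.sub_apply, looCorrection_apply_self g hGinvpp, sub_self]
  refine mulVec_injective_iff_isUnit.mpr hGpp ?_
  rw [hcp, submatrix_val_mulVec_of_apply_eq_zero G hzero, mulVec_sub, mulVec_mulVec,
    mul_nonsing_inv _ ((isUnit_iff_isUnit_det G).mp hG), one_mulVec, mulVec_looCorrection hG]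
  funext j
  rw [Pi.sub_apply, Pi.single_eq_of_ne j.2, sub_zero]

end LeaveOneOut

/-- Leave-one-out case of the surrogate cross-validation theorem: with `u` the `p`-th column
of `L⁻¹` and `w = ((G⁻¹ g)_p / (G⁻¹)_{p,p}) · (p-th column of G⁻¹)`, if `w` is a scalar
multiple of `u` then `e_p = ⟨u, w⟩/‖u‖² − f_p + h_p`. -/
theorem surrogate_loocv {m : ℕ}
    (G L : Matrix (Fin m) (Fin m) ℝ) (g h : Fin m → ℝ)
    (hG : IsUnit G) (hL : IsUnit L)
    (p : Fin m)
    (hGpp : IsUnit (G.submatrix (Subtype.val : {j : Fin m // j ≠ p} → Fin m)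
      (Subtype.val : {j : Fin m // j ≠ p} → Fin m)))
    (hGinvpp : (G⁻¹) p p ≠ 0)
    (c : Fin m → ℝ) (hc : c = G⁻¹ *ᵥ g)
    (f : Fin m → ℝ) (hf : f = L *ᵥ c)
    (cp : {j : Fin m // j ≠ p} → ℝ)
    (hcp : G.submatrix (Subtype.val : {j : Fin m // j ≠ p} → Fin m)
      (Subtype.val : {j : Fin m // j ≠ p} → Fin m) *ᵥ cp = fun j => g j.1)
    (sp : ℝ) (hsp : sp = ∑ j : {j : Fin m // j ≠ p}, L p j.1 * cp j)
    (ep : ℝ) (hep : ep = h p - sp)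
    (u : Fin m → ℝ) (hu : u = fun i => (L⁻¹) i p)
    (w : Fin m → ℝ) (hw : w = fun i => ((G⁻¹ *ᵥ g) p / (G⁻¹) p p) * (G⁻¹) i p)
    (hscalar : ∃ t : ℝ, w = t • u) :
    ep = (u ⬝ᵥ w) / (u ⬝ᵥ u) - f p + h p := by
  obtain ⟨t, hwt⟩ := hscalar
  replace hw : w = looCorrection G g p := hw
  have hLu : L *ᵥ u = Pi.single p 1 := hu ▸ mulVec_col_inv hL p
  have hu0 : u ≠ 0 := fun h0 => by simpa [h0] using congrFun hLu p
  have hcw : (c - w) p = 0 := by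
    rw [Pi.sub_apply, hc, hw, looCorrection_apply_self g hGinvpp, sub_self]
  have hcp' : cp = fun j => (c - w) j.1 := by
    rw [hc, hw]
    exact reduced_solution_eq_sub_looCorrection hG hGpp hGinvpp hcp
  have hsp' : sp = f p - t :=
    calc sp = (L *ᵥ (c - w)) p := by
          rw [hsp, hcp']
          exact sum_subtype_ne_mul_eq_dotProduct (L p) _ hcw
      _ = f p - t := by simp [hwt, mulVec_sub, mulVec_smul, hLu, ← hf]
  rw [hep, hsp', hwt, dotProduct_smul_self_div hu0]
  ring
end

section
/- Extended Rippa's algorithm (the interpolation case G = L of the surrogate scheme, which is exact). Let A be an invertible m×m real matrix, g ∈ ℝ^m, and p : Fin v → Fin m injective. Assume the submatrix A^{p,p} (rows and columns not in the range of p) is invertible and the submatrix (A⁻¹)_{p,p} is invertible. Let c^(p) be the unique solution of A^{p,p} c^(p) = g^p. Then the vector of k-fold cross-validation errors e_p ∈ ℝ^v, with entries (e_p)_i = g_{p_i} − Σ_{j ∉ range p} A_{p_i, j} (c^(p))_j, satisfies e_p = ((A⁻¹)_{p,p})⁻¹ (A⁻¹ g)_p. -/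
open Matrix
open scoped Classical

/-
Extend `c^(p)` by zero to `c ∈ ℝ^m`. The residual `r = g - A c` vanishes off the range of `p`
(that is the interpolation condition for `c^(p)`) and equals `e_p` on it. Hence
`A⁻¹ r = A⁻¹ g - c`, and reading this equation on the range of `p`, where `c` vanishes and
`r` is supported, gives `(A⁻¹)_{p,p} e_p = (A⁻¹ g)_p`.
-/

namespace Matrix

variable {ι κ n K : Type*} [Fintype κ] [Fintype n]

theorem mulVec_eq_submatrix_mulVec_comp [NonUnitalNonAssocSemiring K] (M : Matrix ι n K)
    {e : κ → n} (he : Function.Injective e) {w : n → K} (hw : ∀ j ∉ Set.range e, w j = 0) :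
    M *ᵥ w = M.submatrix id e *ᵥ (w ∘ e) := by
  ext i
  refine (Fintype.sum_of_injective e he _ _ (fun j hj ↦ ?_) fun k ↦ rfl).symm
  simp [hw j hj]

theorem submatrix_inv_mulVec_comp_residual [DecidableEq n] [Field K] {A : Matrix n n K}
    (hA : IsUnit A) {p : κ → n} (hp : Function.Injective p) {g c : n → K}
    (hc : ∀ i, c (p i) = 0) (hr : ∀ j ∉ Set.range p, (g - A *ᵥ c) j = 0) :
    A⁻¹.submatrix p p *ᵥ ((g - A *ᵥ c) ∘ p) = (A⁻¹ *ᵥ g) ∘ p := by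
  have hinv : A⁻¹ *ᵥ (g - A *ᵥ c) = A⁻¹ *ᵥ g - c := by
    rw [mulVec_sub, mulVec_mulVec, nonsing_inv_mul A ((isUnit_iff_isUnit_det A).mp hA),
      one_mulVec]
  ext i
  calc (A⁻¹.submatrix p p *ᵥ ((g - A *ᵥ c) ∘ p)) i = (A⁻¹ *ᵥ (g - A *ᵥ c)) (p i) :=
        (congrFun (mulVec_eq_submatrix_mulVec_comp A⁻¹ hp hr) (p i)).symm
    _ = (A⁻¹ *ᵥ g) (p i) := by simp [hinv, hc]

end Matrix

theorem extended_rippa_general {m v : ℕ}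
    (A : Matrix (Fin m) (Fin m) ℝ) (g : Fin m → ℝ)
    (hA : IsUnit A)
    (p : Fin v → Fin m) (hp : Function.Injective p)
    (hAinvpp : IsUnit ((A⁻¹).submatrix p p))
    (cp : {j : Fin m // j ∉ Set.range p} → ℝ)
    (hcp : A.submatrix (Subtype.val : {j : Fin m // j ∉ Set.range p} → Fin m)
      (Subtype.val : {j : Fin m // j ∉ Set.range p} → Fin m) *ᵥ cp = fun j => g j.1)
    (ep : Fin v → ℝ)
    (hep : ep = fun i => g (p i) - ∑ j : {j : Fin m // j ∉ Set.range p}, A (p i) j.1 * cp j) :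
    ep = ((A⁻¹).submatrix p p)⁻¹ *ᵥ fun i => (A⁻¹ *ᵥ g) (p i) := by
  set c : Fin m → ℝ := Function.extend Subtype.val cp 0
  have hc_comp : c ∘ Subtype.val = cp := funext (Subtype.val_injective.extend_apply cp 0)
  have hc_range : ∀ i, c (p i) = 0 := fun i ↦
    Function.extend_apply' _ _ _ fun ⟨j, hj⟩ ↦ j.2 ⟨i, hj.symm⟩
  have hAc : A *ᵥ c = A.submatrix id Subtype.val *ᵥ cp := by
    rw [mulVec_eq_submatrix_mulVec_comp A Subtype.val_injective
      fun j hj ↦ Function.extend_apply' cp (0 : Fin m → ℝ) j hj, hc_comp]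
  have hr_off : ∀ j ∉ Set.range p, (g - A *ᵥ c) j = 0 := by
    intro j hj
    rw [Pi.sub_apply, hAc, sub_eq_zero]
    exact (congrFun hcp ⟨j, hj⟩).symm
  have hr_on : (g - A *ᵥ c) ∘ p = ep := by
    ext i
    simp [hep, hAc, mulVec, dotProduct]
  have hkey : A⁻¹.submatrix p p *ᵥ ep = fun i ↦ (A⁻¹ *ᵥ g) (p i) :=
    hr_on ▸ submatrix_inv_mulVec_comp_residual hA hp hc_range hr_off
  rw [← hkey, mulVec_mulVec, nonsing_inv_mul _ ((isUnit_iff_isUnit_det _).mp hAinvpp),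
    one_mulVec]

/-- Extended Rippa's algorithm: the vector of `k`-fold cross-validation errors for an
interpolation problem `A c = g` satisfies `e_p = ((A⁻¹)_{p,p})⁻¹ (A⁻¹ g)_p`. -/
theorem extended_rippa {m v : ℕ}
    (A : Matrix (Fin m) (Fin m) ℝ) (g : Fin m → ℝ)
    (hA : IsUnit A)
    (p : Fin v → Fin m) (hp : Function.Injective p)
    (hApp : IsUnit (A.submatrix (Subtype.val : {j : Fin m // j ∉ Set.range p} → Fin m)
      (Subtype.val : {j : Fin m // j ∉ Set.range p} → Fin m)))
    (hAinvpp : IsUnit ((A⁻¹).submatrix p p))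
    (cp : {j : Fin m // j ∉ Set.range p} → ℝ)
    (hcp : A.submatrix (Subtype.val : {j : Fin m // j ∉ Set.range p} → Fin m)
      (Subtype.val : {j : Fin m // j ∉ Set.range p} → Fin m) *ᵥ cp = fun j => g j.1)
    (ep : Fin v → ℝ)
    (hep : ep = fun i => g (p i) - ∑ j : {j : Fin m // j ∉ Set.range p}, A (p i) j.1 * cp j) :
    ep = ((A⁻¹).submatrix p p)⁻¹ *ᵥ fun i => (A⁻¹ *ᵥ g) (p i) :=
  extended_rippa_general A g hA p hp hAinvpp cp hcp ep hep
end

section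
/- Rippa's leave-one-out cross-validation formula. Let A be an invertible m×m real matrix, g ∈ ℝ^m, and p ∈ {1,…,m}. Assume that the (m−1)×(m−1) submatrix of A obtained by deleting row and column p is invertible and that (A⁻¹)_{p,p} ≠ 0. Let c^(p) be the unique solution of the reduced system obtained from Ac = g by deleting the p-th row and column of A and the p-th entry of g. Then the leave-one-out validation error satisfies g_p − Σ_{j ≠ p} A_{p,j} (c^(p))_j = (A⁻¹ g)_p / (A⁻¹)_{p,p}. -/
/-!
Extend the reduced solution `c⁽ᵖ⁾` by zero to a vector `x` with `x p = 0`. Then `A x` agrees with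
`g` off `p`, while its `p`-th entry falls short of `g p` exactly by the leave-one-out residual `r`;
so `A x = g - r eₚ`, i.e. `x = A⁻¹ g - r A⁻¹ eₚ`, and the `p`-th entry of this identity reads
`0 = (A⁻¹ g)ₚ - r (A⁻¹)ₚₚ`.
-/

open Matrix
open scoped Classical

theorem Matrix.mulVec_extend_zero_s4 {m n ι R : Type*} [Fintype n] [Fintype ι]
    [NonUnitalNonAssocSemiring R] (A : Matrix m n R) {f : ι → n} (hf : f.Injective) (c : ι → R) :
    A *ᵥ Function.extend f c 0 = A.submatrix id f *ᵥ c := by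
  ext i
  refine (Fintype.sum_of_injective f hf _ _ (fun j hj => ?_) fun k => ?_).symm
  · rw [Function.extend_apply' _ _ _ hj, Pi.zero_apply, mul_zero]
  · rw [hf.extend_apply]; rfl

theorem Matrix.inv_mulVec_apply_eq_mul_inv_apply {n R : Type*} [Fintype n] [DecidableEq n]
    [CommRing R] {A : Matrix n n R} (hA : IsUnit A) {x g : n → R} {p : n} (hxp : x p = 0)
    (hAx : ∀ i ≠ p, (A *ᵥ x) i = g i) :
    (A⁻¹ *ᵥ g) p = (g - A *ᵥ x) p * A⁻¹ p p := by
  have hdefect : g - A *ᵥ x = Pi.single p ((g - A *ᵥ x) p) := by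
    ext i
    rcases eq_or_ne i p with rfl | hi
    · rw [Pi.single_eq_same]
    · rw [Pi.single_eq_of_ne hi, Pi.sub_apply, hAx i hi, sub_self]
  have hsolve : A⁻¹ *ᵥ (g - A *ᵥ x) = A⁻¹ *ᵥ g - x := by
    rw [mulVec_sub, mulVec_mulVec, nonsing_inv_mul A ((isUnit_iff_isUnit_det A).mp hA),
      one_mulVec]
  have hp := congrFun hsolve p
  rw [Pi.sub_apply, hxp, sub_zero, hdefect, mulVec_single] at hp
  rw [← hp]
  exact mul_comm _ _

theorem rippa_loocv_general {m : ℕ}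
    (A : Matrix (Fin m) (Fin m) ℝ) (g : Fin m → ℝ)
    (hA : IsUnit A)
    (p : Fin m)
    (hAinvpp : (A⁻¹) p p ≠ 0)
    (cp : {j : Fin m // j ≠ p} → ℝ)
    (hcp : A.submatrix (Subtype.val : {j : Fin m // j ≠ p} → Fin m)
      (Subtype.val : {j : Fin m // j ≠ p} → Fin m) *ᵥ cp = fun j => g j.1) :
    g p - ∑ j : {j : Fin m // j ≠ p}, A p j.1 * cp j = (A⁻¹ *ᵥ g) p / (A⁻¹) p p := by
  set x := Function.extend Subtype.val cp 0
  have hAx : A *ᵥ x = A.submatrix id Subtype.val *ᵥ cp :=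
    A.mulVec_extend_zero_s4 Subtype.val_injective cp
  have hxp : x p = 0 := Function.extend_apply' _ _ _ fun ⟨j, hj⟩ => j.2 hj
  have hrows : ∀ i ≠ p, (A *ᵥ x) i = g i := fun i hi => by
    rw [hAx]
    exact congrFun hcp ⟨i, hi⟩
  have key := inv_mulVec_apply_eq_mul_inv_apply hA hxp hrows
  rw [Pi.sub_apply, hAx] at key
  exact eq_div_of_mul_eq hAinvpp key.symm

/-- Rippa's leave-one-out cross-validation formula:
`g_p − Σ_{j ≠ p} A_{p,j} (c^(p))_j = (A⁻¹ g)_p / (A⁻¹)_{p,p}`. -/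
theorem rippa_loocv {m : ℕ}
    (A : Matrix (Fin m) (Fin m) ℝ) (g : Fin m → ℝ)
    (hA : IsUnit A)
    (p : Fin m)
    (hApp : IsUnit (A.submatrix (Subtype.val : {j : Fin m // j ≠ p} → Fin m)
      (Subtype.val : {j : Fin m // j ≠ p} → Fin m)))
    (hAinvpp : (A⁻¹) p p ≠ 0)
    (cp : {j : Fin m // j ≠ p} → ℝ)
    (hcp : A.submatrix (Subtype.val : {j : Fin m // j ≠ p} → Fin m)
      (Subtype.val : {j : Fin m // j ≠ p} → Fin m) *ᵥ cp = fun j => g j.1) :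
    g p - ∑ j : {j : Fin m // j ≠ p}, A p j.1 * cp j = (A⁻¹ *ᵥ g) p / (A⁻¹) p p :=
  rippa_loocv_general A g hA p hAinvpp cp hcp
end

section
/- Characterization of the auxiliary vector β. Let G be an invertible m×m real matrix, g ∈ ℝ^m, and p : Fin v → Fin m injective with the submatrix G^{p,p} invertible. Let c^(p) be the unique solution of G^{p,p} c^(p) = g^p, and let b ∈ ℝ^m be the zero-extension of c^(p), i.e. b_{p_i} = 0 for all i and b_j = (c^(p))_j for j not in the range of p. Define β ∈ ℝ^v by β_i = g_{p_i} − (G b)_{p_i}. Then (G⁻¹)_{p,p} β = (G⁻¹ g)_p; in particular, if (G⁻¹)_{p,p} is invertible, β = ((G⁻¹)_{p,p})⁻¹ (G⁻¹ g)_p. -/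
open Matrix
open scoped Classical

/-!
Put `r := g - G b`. The defining equation of `c^(p)` says exactly that `r` vanishes off the range
of `p`, and `β = r ∘ p`; hence `G⁻¹ r` restricted to `p` is `(G⁻¹)_{p,p} β`. On the other hand
`G⁻¹ r = G⁻¹ g - b`, and `b` vanishes on the range of `p`.
-/

namespace Matrix

variable {l n ι α : Type*} [Fintype n] [Fintype ι] [NonUnitalNonAssocSemiring α]

theorem mulVec_eq_submatrix_mulVec_comp_s6 (A : Matrix l n α) {p : ι → n} (hp : p.Injective)
    {x : n → α} (hx : ∀ k ∉ Set.range p, x k = 0) :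
    A *ᵥ x = A.submatrix id p *ᵥ (x ∘ p) := by
  ext i
  refine (Fintype.sum_of_injective p hp _ _ (fun k hk => ?_) fun j => rfl).symm
  simp [hx k hk]

theorem mulVec_comp_eq_submatrix_mulVec_comp (A : Matrix n n α) {p : ι → n} (hp : p.Injective)
    {x : n → α} (hx : ∀ k ∉ Set.range p, x k = 0) :
    (A *ᵥ x) ∘ p = A.submatrix p p *ᵥ (x ∘ p) := by
  rw [mulVec_eq_submatrix_mulVec_comp_s6 A hp hx]
  rfl

end Matrix

theorem beta_characterization_general {m v : ℕ}
    (G : Matrix (Fin m) (Fin m) ℝ) (g : Fin m → ℝ)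
    (hG : IsUnit G)
    (p : Fin v → Fin m) (hp : Function.Injective p)
    (cp : {j : Fin m // j ∉ Set.range p} → ℝ)
    (hcp : G.submatrix (Subtype.val : {j : Fin m // j ∉ Set.range p} → Fin m)
      (Subtype.val : {j : Fin m // j ∉ Set.range p} → Fin m) *ᵥ cp = fun j => g j.1)
    (b : Fin m → ℝ)
    (hb : b = fun j => if hj : j ∈ Set.range p then 0 else cp ⟨j, hj⟩)
    (β : Fin v → ℝ)
    (hβ : β = fun i => g (p i) - (G *ᵥ b) (p i)) :
    ((G⁻¹).submatrix p p *ᵥ β = fun i => (G⁻¹ *ᵥ g) (p i)) ∧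
      (IsUnit ((G⁻¹).submatrix p p) →
        β = ((G⁻¹).submatrix p p)⁻¹ *ᵥ fun i => (G⁻¹ *ᵥ g) (p i)) := by
  have hb_range : ∀ i, b (p i) = 0 := by simp [hb]
  have hb_compl : b ∘ Subtype.val = cp := by
    ext ⟨j, hj⟩
    simp only [hb, Function.comp_apply, dif_neg hj]
  have hGb : (G *ᵥ b) ∘ Subtype.val = fun j : {j // j ∉ Set.range p} => g j.1 := by
    rw [mulVec_comp_eq_submatrix_mulVec_comp G Subtype.val_injective, hb_compl, hcp]
    rintro k hk
    obtain ⟨i, rfl⟩ : k ∈ Set.range p := by simpa using hk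
    exact hb_range i
  have hr : ∀ k ∉ Set.range p, (g - G *ᵥ b) k = 0 := fun k hk => by
    simpa [sub_eq_zero] using (congrFun hGb ⟨k, hk⟩).symm
  have hGinv_r : G⁻¹ *ᵥ (g - G *ᵥ b) = G⁻¹ *ᵥ g - b := by
    rw [mulVec_sub, mulVec_mulVec, nonsing_inv_mul G ((isUnit_iff_isUnit_det G).mp hG),
      one_mulVec]
  have key : (G⁻¹).submatrix p p *ᵥ β = fun i => (G⁻¹ *ᵥ g) (p i) := by
    have hβ_r : β = (g - G *ᵥ b) ∘ p := hβ
    rw [hβ_r, ← mulVec_comp_eq_submatrix_mulVec_comp _ hp hr, hGinv_r]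
    ext i
    simp [hb_range i]
  refine ⟨key, fun hU => ?_⟩
  have := hU.invertible
  exact (inv_mulVec_eq_vec key.symm).symm

/-- Characterization of the auxiliary vector `β`: with `b` the zero-extension of the reduced
solution `c^(p)` and `β_i = g_{p_i} − (G b)_{p_i}`, one has `(G⁻¹)_{p,p} β = (G⁻¹ g)_p`;
in particular, if `(G⁻¹)_{p,p}` is invertible then `β = ((G⁻¹)_{p,p})⁻¹ (G⁻¹ g)_p`. -/
theorem beta_characterization {m v : ℕ}
    (G : Matrix (Fin m) (Fin m) ℝ) (g : Fin m → ℝ)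
    (hG : IsUnit G)
    (p : Fin v → Fin m) (hp : Function.Injective p)
    (hGpp : IsUnit (G.submatrix (Subtype.val : {j : Fin m // j ∉ Set.range p} → Fin m)
      (Subtype.val : {j : Fin m // j ∉ Set.range p} → Fin m)))
    (cp : {j : Fin m // j ∉ Set.range p} → ℝ)
    (hcp : G.submatrix (Subtype.val : {j : Fin m // j ∉ Set.range p} → Fin m)
      (Subtype.val : {j : Fin m // j ∉ Set.range p} → Fin m) *ᵥ cp = fun j => g j.1)
    (b : Fin m → ℝ)
    (hb : b = fun j => if hj : j ∈ Set.range p then 0 else cp ⟨j, hj⟩)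
    (β : Fin v → ℝ)
    (hβ : β = fun i => g (p i) - (G *ᵥ b) (p i)) :
    ((G⁻¹).submatrix p p *ᵥ β = fun i => (G⁻¹ *ᵥ g) (p i)) ∧
      (IsUnit ((G⁻¹).submatrix p p) →
        β = ((G⁻¹).submatrix p p)⁻¹ *ᵥ fun i => (G⁻¹ *ᵥ g) (p i)) :=
  beta_characterization_general G g hG p hp cp hcp b hb β hβ
end

section
/- Zero-extension representation of the reduced solution. Let G be an invertible m×m real matrix, g ∈ ℝ^m, and p : Fin v → Fin m injective with (G⁻¹)_{p,p} invertible. Define β = ((G⁻¹)_{p,p})⁻¹ (G⁻¹ g)_p and b = G⁻¹g − (G⁻¹)_{:,p} β. Then b_{p_i} = 0 for every i ∈ Fin v, and (G b)_i = g_i for every index i not in the range of p; consequently the restriction b^p of b to the complement of the range of p satisfies G^{p,p} b^p = g^p. -/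
open Matrix
open scoped Classical

/-!
Write `H = G⁻¹`. The defining equation of `β` says exactly that the correction
`H_{:,p} β` agrees with `H g` on the validation indices, so `b` vanishes there. Applying `G`
turns `H_{:,p}` into the columns `(G H)_{:,p} = 1_{:,p}`, which vanish off the range of `p`, so
`G b = g` there. Since `b` is supported off the range of `p`, `(G b)_i` only involves the
columns outside it, i.e. `G^{p,p} b^p = g^p`.
-/

namespace Matrix

variable {ι κ μ ν α : Type*}

theorem submatrix_mulVec_eq_comp [NonUnitalNonAssocSemiring α] [Fintype ν] (A : Matrix κ ι α)
    (r : μ → κ) (c : ν → ι) (x : ν → α) :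
    A.submatrix r c *ᵥ x = (A.submatrix id c *ᵥ x) ∘ r :=
  rfl

theorem mul_submatrix_id [Fintype ι] [NonUnitalNonAssocSemiring α] (A : Matrix κ ι α)
    (B : Matrix ι μ α) (c : ν → μ) :
    A * B.submatrix id c = (A * B).submatrix id c :=
  rfl

theorem one_submatrix_id_mulVec_apply_of_notMem_range [DecidableEq ι] [NonAssocSemiring α]
    [Fintype ν] {c : ν → ι} (x : ν → α) {i : ι} (hi : i ∉ Set.range c) :
    ((1 : Matrix ι ι α).submatrix id c *ᵥ x) i = 0 :=
  Finset.sum_eq_zero fun k _ => by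
    change (1 : Matrix ι ι α) i (c k) * x k = 0
    rw [one_apply_ne fun h => hi ⟨k, h.symm⟩, zero_mul]

theorem mulVec_submatrix_id_mulVec_of_mul_eq_one [Fintype ι] [DecidableEq ι] [Semiring α]
    [Fintype ν] {A B : Matrix ι ι α} (hAB : A * B = 1) (c : ν → ι) (x : ν → α) :
    A *ᵥ (B.submatrix id c *ᵥ x) = (1 : Matrix ι ι α).submatrix id c *ᵥ x := by
  rw [mulVec_mulVec, mul_submatrix_id, hAB]

theorem submatrix_subtype_val_mulVec_of_eq_zero [Fintype ι] [NonUnitalNonAssocSemiring α]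
    (A : Matrix κ ι α) (r : μ → κ) (q : ι → Prop) [DecidablePred q] (b : ι → α)
    (hb : ∀ j, ¬ q j → b j = 0) :
    A.submatrix r (Subtype.val : {j // q j} → ι) *ᵥ (fun j => b j.1) = (A *ᵥ b) ∘ r := by
  funext i
  change ∑ j : {j // q j}, A (r i) j * b j = ∑ j, A (r i) j * b j
  rw [← Fintype.sum_subtype_add_sum_subtype q,
    Fintype.sum_eq_zero (fun j : {j // ¬ q j} => A (r i) j * b j) fun j => by
      rw [hb j j.2, mul_zero],
    add_zero]

end Matrix

theorem zero_extension_reduced_solution_general {m v : ℕ}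
    (G : Matrix (Fin m) (Fin m) ℝ) (g : Fin m → ℝ)
    (hG : IsUnit G)
    (p : Fin v → Fin m)
    (hGinvpp : IsUnit ((G⁻¹).submatrix p p))
    (β : Fin v → ℝ)
    (hβ : β = ((G⁻¹).submatrix p p)⁻¹ *ᵥ fun i => (G⁻¹ *ᵥ g) (p i))
    (b : Fin m → ℝ)
    (hb : b = G⁻¹ *ᵥ g - (G⁻¹).submatrix id p *ᵥ β) :
    (∀ i : Fin v, b (p i) = 0) ∧
      (∀ i : Fin m, i ∉ Set.range p → (G *ᵥ b) i = g i) ∧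
      G.submatrix (Subtype.val : {j : Fin m // j ∉ Set.range p} → Fin m)
          (Subtype.val : {j : Fin m // j ∉ Set.range p} → Fin m) *ᵥ (fun j => b j.1) =
        fun j => g j.1 := by
  have hGGinv : G * G⁻¹ = 1 := mul_nonsing_inv G ((isUnit_iff_isUnit_det G).mp hG)
  have hβ_solves : (G⁻¹).submatrix p p *ᵥ β = (G⁻¹ *ᵥ g) ∘ p := by
    rw [hβ, mulVec_mulVec, mul_nonsing_inv _ ((isUnit_iff_isUnit_det _).mp hGinvpp), one_mulVec]
    rfl
  have hb_p : ∀ i, b (p i) = 0 := fun i => by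
    rw [hb, Pi.sub_apply, ← Function.comp_apply (f := _ *ᵥ β), ← submatrix_mulVec_eq_comp,
      hβ_solves, Function.comp_apply, sub_self]
  have hGb : ∀ i ∉ Set.range p, (G *ᵥ b) i = g i := fun i hi => by
    rw [hb, mulVec_sub, mulVec_mulVec, hGGinv, one_mulVec,
      mulVec_submatrix_id_mulVec_of_mul_eq_one hGGinv, Pi.sub_apply,
      one_submatrix_id_mulVec_apply_of_notMem_range _ hi, sub_zero]
  refine ⟨hb_p, hGb, ?_⟩
  rw [submatrix_subtype_val_mulVec_of_eq_zero _ _ (· ∉ Set.range p) _ fun j hj => ?_]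
  · exact funext fun j => hGb j j.2
  · obtain ⟨i, rfl⟩ := not_not.mp hj
    exact hb_p i

/-- Zero-extension representation of the reduced solution: with
`β = ((G⁻¹)_{p,p})⁻¹ (G⁻¹ g)_p` and `b = G⁻¹g − (G⁻¹)_{:,p} β`, the vector `b` vanishes on
the validation indices, `(G b)_i = g_i` off the range of `p`, and `G^{p,p} b^p = g^p`. -/
theorem zero_extension_reduced_solution {m v : ℕ}
    (G : Matrix (Fin m) (Fin m) ℝ) (g : Fin m → ℝ)
    (hG : IsUnit G)
    (p : Fin v → Fin m) (hp : Function.Injective p)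
    (hGinvpp : IsUnit ((G⁻¹).submatrix p p))
    (β : Fin v → ℝ)
    (hβ : β = ((G⁻¹).submatrix p p)⁻¹ *ᵥ fun i => (G⁻¹ *ᵥ g) (p i))
    (b : Fin m → ℝ)
    (hb : b = G⁻¹ *ᵥ g - (G⁻¹).submatrix id p *ᵥ β) :
    (∀ i : Fin v, b (p i) = 0) ∧
      (∀ i : Fin m, i ∉ Set.range p → (G *ᵥ b) i = g i) ∧
      G.submatrix (Subtype.val : {j : Fin m // j ∉ Set.range p} → Fin m)
          (Subtype.val : {j : Fin m // j ∉ Set.range p} → Fin m) *ᵥ (fun j => b j.1) =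
        fun j => g j.1 :=
  zero_extension_reduced_solution_general G g hG p hGinvpp β hβ b hb
end

section
/- Linking identity between the correction vectors α and β. Let G and L be invertible m×m real matrices, g ∈ ℝ^m, f = L G⁻¹ g, and p : Fin v → Fin m injective. Suppose b ∈ ℝ^m and α, β ∈ ℝ^v satisfy L·b = f − Σ_{i=1}^{v} α_i I_{:,p_i} and G·b = g − Σ_{i=1}^{v} β_i I_{:,p_i}, where I_{:,j} denotes the j-th standard basis vector of ℝ^m. Then Σ_{i=1}^{v} α_i (L⁻¹)_{:,p_i} = Σ_{i=1}^{v} β_i (G⁻¹)_{:,p_i}; that is, (L⁻¹)_{:,p} α = (G⁻¹)_{:,p} β. -/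
open Matrix
open scoped Classical

/-! Both systems can be solved for `b`: since `L⁻¹ f = G⁻¹ g`, this gives
`b = G⁻¹ g - (L⁻¹)_{:,p} α = G⁻¹ g - (G⁻¹)_{:,p} β`, and the corrections must agree. -/

namespace Matrix

variable {m n ι R : Type*} [Fintype ι]

theorem sum_smul_col_eq_submatrix_mulVec [CommSemiring R] (M : Matrix m n R) (p : ι → n)
    (α : ι → R) : (∑ i, α i • fun j => M j (p i)) = M.submatrix id p *ᵥ α := by
  ext j
  simp only [Finset.sum_apply, Pi.smul_apply, smul_eq_mul, mulVec, dotProduct, submatrix_apply,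
    id, mul_comm]

theorem mulVec_one_submatrix_mulVec [Fintype n] [CommSemiring R] [DecidableEq n]
    (M : Matrix m n R) (p : ι → n) (α : ι → R) :
    M *ᵥ ((1 : Matrix n n R).submatrix id p *ᵥ α) = M.submatrix id p *ᵥ α := by
  rw [mulVec_mulVec]
  exact congrArg (· *ᵥ α) (mul_submatrix_one (Equiv.refl n) p M)

theorem inv_mulVec_mulVec_of_isUnit [Fintype n] [CommRing R] [DecidableEq n] {A : Matrix n n R}
    (hA : IsUnit A) (x : n → R) : A⁻¹ *ᵥ (A *ᵥ x) = x := by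
  rw [mulVec_mulVec, nonsing_inv_mul A ((isUnit_iff_isUnit_det A).mp hA), one_mulVec]

theorem eq_sub_of_mulVec_eq_sub_one_submatrix_mulVec [Fintype n] [CommRing R]
    [DecidableEq n] {A : Matrix n n R} (hA : IsUnit A) {x y : n → R} {p : ι → n} {α : ι → R}
    (h : A *ᵥ x = y - (1 : Matrix n n R).submatrix id p *ᵥ α) :
    x = A⁻¹ *ᵥ y - A⁻¹.submatrix id p *ᵥ α := by
  rw [← inv_mulVec_mulVec_of_isUnit hA x, h, mulVec_sub, mulVec_one_submatrix_mulVec]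

end Matrix

theorem alpha_beta_link_general {m v : ℕ}
    (G L : Matrix (Fin m) (Fin m) ℝ) (g : Fin m → ℝ)
    (hG : IsUnit G) (hL : IsUnit L)
    (f : Fin m → ℝ) (hf : f = L *ᵥ (G⁻¹ *ᵥ g))
    (p : Fin v → Fin m)
    (b : Fin m → ℝ) (α β : Fin v → ℝ)
    (hLb : L *ᵥ b = f - ∑ i : Fin v, α i • fun j => (1 : Matrix (Fin m) (Fin m) ℝ) j (p i))
    (hGb : G *ᵥ b = g - ∑ i : Fin v, β i • fun j => (1 : Matrix (Fin m) (Fin m) ℝ) j (p i)) :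
    (∑ i : Fin v, α i • fun j => (L⁻¹) j (p i)) =
        (∑ i : Fin v, β i • fun j => (G⁻¹) j (p i)) ∧
      (L⁻¹).submatrix id p *ᵥ α = (G⁻¹).submatrix id p *ᵥ β := by
  simp only [sum_smul_col_eq_submatrix_mulVec] at hLb hGb ⊢
  have hbL : b = G⁻¹ *ᵥ g - L⁻¹.submatrix id p *ᵥ α := by
    rw [eq_sub_of_mulVec_eq_sub_one_submatrix_mulVec hL hLb, hf, inv_mulVec_mulVec_of_isUnit hL]
  have hbG := eq_sub_of_mulVec_eq_sub_one_submatrix_mulVec hG hGb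
  have hcols : L⁻¹.submatrix id p *ᵥ α = G⁻¹.submatrix id p *ᵥ β :=
    sub_right_injective (hbL.symm.trans hbG)
  exact ⟨hcols, hcols⟩

/-- Linking identity between the correction vectors `α` and `β`: if
`L b = f − Σᵢ αᵢ I_{:,pᵢ}` and `G b = g − Σᵢ βᵢ I_{:,pᵢ}` with `f = L G⁻¹ g`, then
`Σᵢ αᵢ (L⁻¹)_{:,pᵢ} = Σᵢ βᵢ (G⁻¹)_{:,pᵢ}`, i.e. `(L⁻¹)_{:,p} α = (G⁻¹)_{:,p} β`. -/
theorem alpha_beta_link {m v : ℕ}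
    (G L : Matrix (Fin m) (Fin m) ℝ) (g : Fin m → ℝ)
    (hG : IsUnit G) (hL : IsUnit L)
    (f : Fin m → ℝ) (hf : f = L *ᵥ (G⁻¹ *ᵥ g))
    (p : Fin v → Fin m) (hp : Function.Injective p)
    (b : Fin m → ℝ) (α β : Fin v → ℝ)
    (hLb : L *ᵥ b = f - ∑ i : Fin v, α i • fun j => (1 : Matrix (Fin m) (Fin m) ℝ) j (p i))
    (hGb : G *ᵥ b = g - ∑ i : Fin v, β i • fun j => (1 : Matrix (Fin m) (Fin m) ℝ) j (p i)) :
    (∑ i : Fin v, α i • fun j => (L⁻¹) j (p i)) =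
        (∑ i : Fin v, β i • fun j => (G⁻¹) j (p i)) ∧
      (L⁻¹).submatrix id p *ᵥ α = (G⁻¹).submatrix id p *ᵥ β :=
  alpha_beta_link_general G L g hG hL f hf p b α β hLb hGb
end
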